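/- The expected influence σ^(V,A) is monotonically increasing in the initial set: for all sets A ⊆ B ⊆ V, σ^(V,A) ≤ σ^(V,B). -/

import Mathlib

/-!
Splitting off the first step of an acyclic path gives the recursion
`c^W(j → D) = 1` for `j ∈ D`, `c^W(j → D) = ∑ᵢ w(i,j) c^(W∖{j})(i → D)` for `j ∈ W ∖ D`, and
`c^W(j → D) = 0` otherwise. Induction on `W` then shows `c^W(j → D) ≤ 1`, because the weights into
a node sum to at most one, and `c^W(j → A) ≤ c^W(j → B)` for `A ⊆ B`: at `j ∈ B` the right side
is `1`, and elsewhere both sides unfold by the same recursion.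
-/

open Finset

noncomputable def cPath {V : Type*} [Fintype V] [DecidableEq V]
    (w : V → V → ℝ) (W D : Finset V) (j : V) : ℝ := by
  classical
  exact ∑' k : ℕ, ∑ x : Fin (k + 1) → V,
    if x 0 = j ∧ Function.Injective x ∧
        (∀ m : Fin (k + 1), (m : ℕ) < k → x m ∈ W \ D) ∧ x (Fin.last k) ∈ D
    then ∏ i : Fin k, w (x i.succ) (x i.castSucc) else 0

noncomputable def cPathVia {V : Type*} [Fintype V] [DecidableEq V]
    (w : V → V → ℝ) (W D : Finset V) (j v : V) : ℝ := by
  classical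
  exact ∑' k : ℕ, ∑ x : Fin (k + 1) → V,
    if x 0 = j ∧ Function.Injective x ∧
        (∀ m : Fin (k + 1), (m : ℕ) < k → x m ∈ W \ D) ∧ x (Fin.last k) ∈ D ∧
        (∃ u : Fin (k + 1), (u : ℕ) < k ∧ x u = v)
    then ∏ i : Fin k, w (x i.succ) (x i.castSucc) else 0

noncomputable def sigmaInfl {V : Type*} [Fintype V] [DecidableEq V]
    (w : V → V → ℝ) (W A : Finset V) : ℝ :=
  ∑ j ∈ W, cPath w W A j

def pjv {V : Type*} (w : V → V → ℝ) (j v : V) : List V → ℝ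
  | [] => w v j
  | l :: ls => w l j * pjv w l v ls

noncomputable def fPoly {ι : Type*} [DecidableEq ι] (m : ℕ) (T : Finset ι) (x : ι → ℝ) : ℝ :=
  (Nat.factorial m : ℝ) * ∑ S ∈ T.powersetCard m, ∏ s ∈ S, x s

section AcyclicPaths

variable {V : Type*}

def pathWeight (w : V → V → ℝ) {k : ℕ} (x : Fin (k + 1) → V) : ℝ :=
  ∏ i : Fin k, w (x i.succ) (x i.castSucc)

lemma pathWeight_cons (w : V → V → ℝ) {k : ℕ} (a : V) (y : Fin (k + 1) → V) :
    pathWeight w (Fin.cons a y : Fin (k + 2) → V) = w (y 0) a * pathWeight w y := by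
  simp [pathWeight, Fin.prod_univ_succ]

variable [DecidableEq V]

def IsAcyclicPath (W D : Finset V) {k : ℕ} (x : Fin (k + 1) → V) : Prop :=
  Function.Injective x ∧ (∀ m : Fin (k + 1), (m : ℕ) < k → x m ∈ W \ D) ∧ x (Fin.last k) ∈ D

lemma isAcyclicPath_cons_iff {W D : Finset V} {k : ℕ} {a : V} {y : Fin (k + 1) → V} :
    IsAcyclicPath W D (Fin.cons a y : Fin (k + 2) → V) ↔
      a ∈ W \ D ∧ IsAcyclicPath (W.erase a) D y := by
  simp only [IsAcyclicPath, Fin.cons_injective_iff, ← Fin.succ_last, Fin.cons_succ]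
  constructor
  · rintro ⟨⟨hay, hinj⟩, hmem, hlast⟩
    have hy (m : Fin (k + 1)) (hm : (m : ℕ) < k) : y m ∈ W \ D := by
      simpa using hmem m.succ (by simpa using hm)
    refine ⟨by simpa using hmem 0 (by simp), hinj, fun m hm => ?_, hlast⟩
    have hym := hy m hm
    simp only [mem_sdiff, mem_erase] at hym ⊢
    exact ⟨⟨fun h => hay ⟨m, h⟩, hym.1⟩, hym.2⟩
  · rintro ⟨ha, hinj, hmem, hlast⟩
    refine ⟨⟨?_, hinj⟩, Fin.cases (fun _ => ha) fun m hm => ?_, hlast⟩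
    · rintro ⟨m, rfl⟩
      rcases (Nat.lt_succ_iff.mp m.isLt).lt_or_eq with hm | hm
      · simpa using hmem m hm
      · exact (mem_sdiff.mp ha).2 (by rwa [show m = Fin.last k from Fin.ext hm])
    · have := hmem m (by simpa using hm)
      simp only [Fin.cons_succ, mem_sdiff, mem_erase] at this ⊢
      exact ⟨this.1.2, this.2⟩

variable [Fintype V]

open Classical in
noncomputable def pathSum (w : V → V → ℝ) (W D : Finset V) (j : V) (k : ℕ) : ℝ :=
  ∑ x : Fin (k + 1) → V, if x 0 = j ∧ IsAcyclicPath W D x then pathWeight w x else 0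

lemma cPath_eq_tsum_pathSum (w : V → V → ℝ) (W D : Finset V) (j : V) :
    cPath w W D j = ∑' k, pathSum w W D j k := by
  unfold cPath pathSum IsAcyclicPath pathWeight
  congr! 4

lemma pathSum_eq_zero (w : V → V → ℝ) (W D : Finset V) (j : V) {k : ℕ}
    (hk : Fintype.card V ≤ k) : pathSum w W D j k = 0 := by
  refine sum_eq_zero fun x _ => if_neg fun ⟨_, hinj, _⟩ => ?_
  have := Fintype.card_le_of_injective x hinj
  simp only [Fintype.card_fin] at this
  omega

lemma summable_pathSum (w : V → V → ℝ) (W D : Finset V) (j : V) :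
    Summable (pathSum w W D j) :=
  summable_of_ne_finset_zero (s := range (Fintype.card V))
    fun _ hk => pathSum_eq_zero w W D j (by simpa using hk)

lemma pathSum_zero (w : V → V → ℝ) (W D : Finset V) (j : V) :
    pathSum w W D j 0 = if j ∈ D then 1 else 0 := by
  rw [pathSum, ← (Equiv.funUnique (Fin 1) V).symm.sum_comp]
  simp [IsAcyclicPath, Function.injective_of_subsingleton, pathWeight, ite_and]

lemma pathSum_succ (w : V → V → ℝ) (W D : Finset V) (j : V) (k : ℕ) :
    pathSum w W D j (k + 1) =
      if j ∈ W \ D then ∑ i, w i j * pathSum w (W.erase j) D i k else 0 := by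
  classical
  have hsplit : pathSum w W D j (k + 1) = ∑ a, ∑ y : Fin (k + 1) → V,
      if a = j ∧ a ∈ W \ D ∧ IsAcyclicPath (W.erase a) D y then w (y 0) a * pathWeight w y
      else 0 := by
    rw [pathSum, ← (Fin.consEquiv fun _ : Fin (k + 2) => V).sum_comp, Fintype.sum_prod_type]
    simp only [Fin.consEquiv, Equiv.coe_fn_mk, Fin.cons_zero, isAcyclicPath_cons_iff,
      pathWeight_cons]
  rw [hsplit, sum_eq_single j (fun a _ ha => by simp [ha]) (by simp)]
  split_ifs with hj
  · simp only [hj, true_and, pathSum, mul_sum, mul_ite, mul_zero, ite_and]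
    rw [sum_comm]
    simp [sum_ite_eq]
  · simp only [hj, false_and, and_false, if_false, sum_const_zero]

lemma cPath_eq (w : V → V → ℝ) (W D : Finset V) (j : V) :
    cPath w W D j = (if j ∈ D then 1 else 0) +
      if j ∈ W \ D then ∑ i, w i j * cPath w (W.erase j) D i else 0 := by
  rw [cPath_eq_tsum_pathSum, (summable_pathSum w W D j).tsum_eq_zero_add, pathSum_zero]
  simp_rw [pathSum_succ]
  by_cases hj : j ∈ W \ D
  · simp only [hj, if_true, cPath_eq_tsum_pathSum, ← tsum_mul_left]
    rw [Summable.tsum_finsetSum fun i _ => (summable_pathSum w _ D i).mul_left _]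
  · simp only [hj, if_false, tsum_zero]

lemma cPath_of_mem (w : V → V → ℝ) (W : Finset V) {D : Finset V} {j : V} (hj : j ∈ D) :
    cPath w W D j = 1 := by
  simp [cPath_eq, hj]

lemma cPath_of_notMem (w : V → V → ℝ) {W D : Finset V} {j : V} (hjW : j ∉ W) (hjD : j ∉ D) :
    cPath w W D j = 0 := by
  simp [cPath_eq, hjW, hjD]

lemma cPath_of_mem_sdiff (w : V → V → ℝ) {W D : Finset V} {j : V} (hj : j ∈ W \ D) :
    cPath w W D j = ∑ i, w i j * cPath w (W.erase j) D i := by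
  rw [cPath_eq, if_neg (mem_sdiff.mp hj).2, if_pos hj, zero_add]

end AcyclicPaths

section Monotonicity

variable {V : Type*} [Fintype V] [DecidableEq V] {w : V → V → ℝ}

lemma cPath_le_one (hw0 : ∀ i j : V, 0 ≤ w i j)
    (hw1 : ∀ j : V, ∑ i ∈ univ.erase j, w i j ≤ 1) (W D : Finset V) (j : V) :
    cPath w W D j ≤ 1 := by
  induction W using Finset.strongInduction generalizing j with
  | _ W ih =>
    by_cases hjD : j ∈ D
    · exact (cPath_of_mem w W hjD).le
    by_cases hjW : j ∈ W
    swap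
    · simp [cPath_of_notMem w hjW hjD]
    -- a path leaving `j` never returns to it, so the edge weights into `j` are counted at most once
    have hj : cPath w (W.erase j) D j = 0 := cPath_of_notMem w (W.notMem_erase j) hjD
    calc cPath w W D j
        = ∑ i ∈ univ.erase j, w i j * cPath w (W.erase j) D i := by
          rw [cPath_of_mem_sdiff w (mem_sdiff.mpr ⟨hjW, hjD⟩),
            ← sum_erase_add _ _ (mem_univ j), hj, mul_zero, add_zero]
      _ ≤ ∑ i ∈ univ.erase j, w i j :=
          sum_le_sum fun i _ => mul_le_of_le_one_right (hw0 i j) (ih _ (erase_ssubset hjW) i)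
      _ ≤ 1 := hw1 j

lemma cPath_mono_right (hw0 : ∀ i j : V, 0 ≤ w i j)
    (hw1 : ∀ j : V, ∑ i ∈ univ.erase j, w i j ≤ 1) {A B : Finset V} (hAB : A ⊆ B)
    (W : Finset V) (j : V) : cPath w W A j ≤ cPath w W B j := by
  induction W using Finset.strongInduction generalizing j with
  | _ W ih =>
    by_cases hjB : j ∈ B
    · rw [cPath_of_mem w W hjB]
      exact cPath_le_one hw0 hw1 W A j
    have hjA : j ∉ A := fun h => hjB (hAB h)
    by_cases hjW : j ∈ W
    · rw [cPath_of_mem_sdiff w (mem_sdiff.mpr ⟨hjW, hjA⟩),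
        cPath_of_mem_sdiff w (mem_sdiff.mpr ⟨hjW, hjB⟩)]
      exact sum_le_sum fun i _ =>
        mul_le_mul_of_nonneg_left (ih _ (erase_ssubset hjW) i) (hw0 i j)
    · rw [cPath_of_notMem w hjW hjA, cPath_of_notMem w hjW hjB]

end Monotonicity

theorem stmt11 {V : Type*} [Fintype V] [DecidableEq V] (w : V → V → ℝ)
    (hw0 : ∀ i j : V, 0 ≤ w i j)
    (hw1 : ∀ j : V, ∑ i ∈ Finset.univ.erase j, w i j ≤ 1)
    (A B : Finset V) (hAB : A ⊆ B) :
    sigmaInfl w Finset.univ A ≤ sigmaInfl w Finset.univ B :=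
  sum_le_sum fun j _ => cPath_mono_right hw0 hw1 hAB univ j
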